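/- Let d ∈ {2,3}, ε > 0, and v, H ∈ ℝ^d with ε²|v|² < 1; set Γ := (1 − ε²|v|²)^{−1/2}, M₀ := Γ⁻¹(I_d + ε²Γ²v⊗v), 𝐚 := ε²(|H|²v − (v·H)H), and 𝐛 := Γ⁻²H + ε²(v·H)v. Let 𝐉 be the (2d+2)×(2d+2) block matrix (blocks of sizes 1, d, d, 1) [[1, 𝐚ᵀ, −𝐛ᵀ, 0], [0, Γ²M₀, O_d, 0], [0, O_d, I_d, 0], [0, 0, 0, 1]]. Then det 𝐉 = Γ^{d+2} (in particular det 𝐉 = Γ⁵ when d = 3), so 𝐉 is invertible. -/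

import Mathlib

open Matrix

/-- The Lorentz factor `Γ = (1 − ε²|v|²)^{−1/2}`. -/
noncomputable def lorentz (d : ℕ) (ε : ℝ) (v : Fin d → ℝ) : ℝ :=
  (Real.sqrt (1 - ε ^ 2 * ∑ i, v i ^ 2))⁻¹

/-- `|b|² = ε²Γ⁻²|H|² + ε⁴(v·H)²`, the Minkowski norm squared of the magnetic field
`d`-vector. -/
noncomputable def bsq (d : ℕ) (ε : ℝ) (v H : Fin d → ℝ) : ℝ :=
  ε ^ 2 * (lorentz d ε v)⁻¹ ^ 2 * (∑ i, H i ^ 2) + ε ^ 4 * (∑ i, v i * H i) ^ 2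

/-- `M₀ = Γ⁻¹(I_d + ε²Γ² v⊗v)`. -/
noncomputable def M0rel (d : ℕ) (ε : ℝ) (v : Fin d → ℝ) : Matrix (Fin d) (Fin d) ℝ :=
  (lorentz d ε v)⁻¹ • ((1 : Matrix (Fin d) (Fin d) ℝ)
    + (ε ^ 2 * lorentz d ε v ^ 2) • vecMulVec v v)

/-- `𝒜₀`, the velocity block of the relativistic MHD symmetrizer `B₀(V)`. -/
noncomputable def calA0 (d : ℕ) (ε ρ h : ℝ) (v H : Fin d → ℝ) :
    Matrix (Fin d) (Fin d) ℝ :=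
  (ρ * h * lorentz d ε v + ε ^ 2 * (lorentz d ε v)⁻¹ * ∑ i, H i ^ 2) •
      ((1 : Matrix (Fin d) (Fin d) ℝ) - ε ^ 2 • vecMulVec v v)
    - (ε ^ 2 * (lorentz d ε v)⁻¹ * bsq d ε v H) • vecMulVec v v
    - (ε ^ 2 * (lorentz d ε v)⁻¹) • vecMulVec H H
    + (ε ^ 4 * (lorentz d ε v)⁻¹ * ∑ i, v i * H i) • (vecMulVec H v + vecMulVec v H)

/-- `𝒜ᵢ`, the velocity block of `Bᵢ(V)`, `i = 1, …, d`. -/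
noncomputable def calAi (d : ℕ) (ε ρ h : ℝ) (v H : Fin d → ℝ) (i : Fin d) :
    Matrix (Fin d) (Fin d) ℝ :=
  v i • ((ρ * h * lorentz d ε v + ε ^ 2 * (lorentz d ε v)⁻¹ * ∑ j, H j ^ 2) •
        ((1 : Matrix (Fin d) (Fin d) ℝ) - ε ^ 2 • vecMulVec v v)
      + (ε ^ 2 * (lorentz d ε v)⁻¹) • (bsq d ε v H • vecMulVec v v - vecMulVec H H))
    + (ε ^ 2 * (lorentz d ε v)⁻¹ * H i) •
        (((lorentz d ε v)⁻¹ ^ 2) • (vecMulVec H v + vecMulVec v H)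
          - (2 * ∑ j, v j * H j) •
              ((1 : Matrix (Fin d) (Fin d) ℝ) - ε ^ 2 • vecMulVec v v))
    + (lorentz d ε v)⁻¹ •
        vecMulVec ((ε ^ 2 * ∑ j, v j * H j) • H - bsq d ε v H • v) (Pi.single i 1)
    + (lorentz d ε v)⁻¹ •
        vecMulVec (Pi.single i 1) ((ε ^ 2 * ∑ j, v j * H j) • H - bsq d ε v H • v)

/-- `𝒩ᵢ = (Γ⁻²H + ε²(v·H)v)⊗(eᵢ − ε²vᵢv) − Γ⁻²Hᵢ I_d`. -/
noncomputable def calNi (d : ℕ) (ε : ℝ) (v H : Fin d → ℝ) (i : Fin d) :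
    Matrix (Fin d) (Fin d) ℝ :=
  vecMulVec (((lorentz d ε v)⁻¹ ^ 2) • H + (ε ^ 2 * ∑ j, v j * H j) • v)
      (Pi.single i 1 - (ε ^ 2 * v i) • v)
    - ((lorentz d ε v)⁻¹ ^ 2 * H i) • (1 : Matrix (Fin d) (Fin d) ℝ)

/-- Index type for the `(2d+2) × (2d+2)` matrices of the symmetrized ideal relativistic MHD
system, blocks of sizes `1, d, d, 1`. -/
abbrev RMHDIdx (d : ℕ) := Unit ⊕ Fin d ⊕ Fin d ⊕ Unit

/-- The symmetrizer `B₀(V)` of ideal relativistic MHD. -/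
noncomputable def B0mat (d : ℕ) (ε ρ h a : ℝ) (v H : Fin d → ℝ) :
    Matrix (RMHDIdx d) (RMHDIdx d) ℝ :=
  Matrix.of fun p q =>
    match p, q with
    | Sum.inl _, Sum.inl _ => lorentz d ε v / (ρ * a ^ 2)
    | Sum.inl _, Sum.inr (Sum.inl j) => ε ^ 2 * v j
    | Sum.inr (Sum.inl i), Sum.inl _ => ε ^ 2 * v i
    | Sum.inr (Sum.inl i), Sum.inr (Sum.inl j) => calA0 d ε ρ h v H i j
    | Sum.inr (Sum.inr (Sum.inl i)), Sum.inr (Sum.inr (Sum.inl j)) => M0rel d ε v i j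
    | Sum.inr (Sum.inr (Sum.inr _)), Sum.inr (Sum.inr (Sum.inr _)) => 1
    | _, _ => 0

/-- The matrices `Bᵢ(V)`, `i = 1, …, d`, of the symmetrized ideal relativistic MHD system. -/
noncomputable def Bimat (d : ℕ) (ε ρ h a : ℝ) (v H : Fin d → ℝ) (i : Fin d) :
    Matrix (RMHDIdx d) (RMHDIdx d) ℝ :=
  Matrix.of fun p q =>
    match p, q with
    | Sum.inl _, Sum.inl _ => lorentz d ε v * v i / (ρ * a ^ 2)
    | Sum.inl _, Sum.inr (Sum.inl j) => if i = j then 1 else 0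
    | Sum.inr (Sum.inl j), Sum.inl _ => if i = j then 1 else 0
    | Sum.inr (Sum.inl j), Sum.inr (Sum.inl k) => calAi d ε ρ h v H i j k
    | Sum.inr (Sum.inl j), Sum.inr (Sum.inr (Sum.inl k)) => calNi d ε v H i k j
    | Sum.inr (Sum.inr (Sum.inl j)), Sum.inr (Sum.inl k) => calNi d ε v H i j k
    | Sum.inr (Sum.inr (Sum.inl j)), Sum.inr (Sum.inr (Sum.inl k)) => v i * M0rel d ε v j k
    | Sum.inr (Sum.inr (Sum.inr _)), Sum.inr (Sum.inr (Sum.inr _)) => v i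
    | _, _ => 0

/-- The Jacobian `𝐉 = ∂V/∂U` of the change of unknowns `U = (q, v, H, S) ↦ V = (p, w, H, S)`
in ideal relativistic MHD, with `𝐚 = ε²(|H|²v − (v·H)H)` and `𝐛 = Γ⁻²H + ε²(v·H)v`. -/
noncomputable def Jac (d : ℕ) (ε : ℝ) (v H : Fin d → ℝ) :
    Matrix (RMHDIdx d) (RMHDIdx d) ℝ :=
  Matrix.of fun p q =>
    match p, q with
    | Sum.inl _, Sum.inl _ => 1
    | Sum.inl _, Sum.inr (Sum.inl j) =>
        ε ^ 2 * ((∑ k, H k ^ 2) * v j - (∑ k, v k * H k) * H j)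
    | Sum.inl _, Sum.inr (Sum.inr (Sum.inl j)) =>
        -((lorentz d ε v)⁻¹ ^ 2 * H j + ε ^ 2 * (∑ k, v k * H k) * v j)
    | Sum.inr (Sum.inl i), Sum.inr (Sum.inl j) => lorentz d ε v ^ 2 * M0rel d ε v i j
    | Sum.inr (Sum.inr (Sum.inl i)), Sum.inr (Sum.inr (Sum.inl j)) => if i = j then 1 else 0
    | Sum.inr (Sum.inr (Sum.inr _)), Sum.inr (Sum.inr (Sum.inr _)) => 1
    | _, _ => 0

/-!
`𝐉` is block upper triangular with diagonal blocks `1, Γ²M₀, I_d, 1`, so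
`det 𝐉 = det (Γ²M₀) = Γ^d det (I_d + ε²Γ² v⊗v)`. By the matrix determinant lemma the last
determinant is `1 + ε²Γ²|v|²`, which equals `Γ²` because `Γ²(1 − ε²|v|²) = 1`.
-/

theorem Matrix.det_one_add_vecMulVec {m R : Type*} [Fintype m] [DecidableEq m] [CommRing R]
    (u w : m → R) : det (1 + vecMulVec u w) = 1 + w ⬝ᵥ u := by
  rw [vecMulVec_eq Unit, det_one_add_replicateCol_mul_replicateRow]

section Lorentz

variable {d : ℕ} {ε : ℝ} {v : Fin d → ℝ}

lemma lorentz_pos (hv : ε ^ 2 * ∑ i, v i ^ 2 < 1) : 0 < lorentz d ε v :=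
  inv_pos.2 (Real.sqrt_pos.2 (by linarith))

lemma lorentz_sq (hv : ε ^ 2 * ∑ i, v i ^ 2 < 1) :
    lorentz d ε v ^ 2 = (1 - ε ^ 2 * ∑ i, v i ^ 2)⁻¹ := by
  rw [lorentz, inv_pow, Real.sq_sqrt (by linarith)]

lemma one_add_mul_lorentz_sq (hv : ε ^ 2 * ∑ i, v i ^ 2 < 1) :
    1 + ε ^ 2 * lorentz d ε v ^ 2 * ∑ i, v i ^ 2 = lorentz d ε v ^ 2 := by
  have hne : 1 - ε ^ 2 * ∑ i, v i ^ 2 ≠ 0 := by linarith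
  rw [lorentz_sq hv]
  field_simp
  ring

lemma lorentz_sq_smul_M0rel (hv : ε ^ 2 * ∑ i, v i ^ 2 < 1) :
    lorentz d ε v ^ 2 • M0rel d ε v =
      lorentz d ε v • (1 + vecMulVec ((ε ^ 2 * lorentz d ε v ^ 2) • v) v) := by
  have hΓ := (lorentz_pos hv).ne'
  rw [M0rel, smul_smul, smul_vecMulVec]
  congr 1
  field_simp

lemma det_lorentz_sq_smul_M0rel (hv : ε ^ 2 * ∑ i, v i ^ 2 < 1) :
    (lorentz d ε v ^ 2 • M0rel d ε v).det = lorentz d ε v ^ (d + 2) := by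
  rw [lorentz_sq_smul_M0rel hv, det_smul, Fintype.card_fin, det_one_add_vecMulVec,
    dotProduct_smul, smul_eq_mul]
  simp only [dotProduct, ← sq]
  linear_combination lorentz d ε v ^ d * one_add_mul_lorentz_sq hv

end Lorentz

lemma Jac_eq_fromBlocks (d : ℕ) (ε : ℝ) (v H : Fin d → ℝ) :
    Jac d ε v H = fromBlocks 1 (of fun _ q => Jac d ε v H (Sum.inl ()) (Sum.inr q)) 0
      (fromBlocks (lorentz d ε v ^ 2 • M0rel d ε v) 0 0 1) := by
  ext (_ | i | i | _) (_ | j | j | _) <;> simp [Jac, fromBlocks, one_apply]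

lemma det_Jac {d : ℕ} {ε : ℝ} {v : Fin d → ℝ} (H : Fin d → ℝ)
    (hv : ε ^ 2 * ∑ i, v i ^ 2 < 1) : (Jac d ε v H).det = lorentz d ε v ^ (d + 2) := by
  rw [Jac_eq_fromBlocks, det_fromBlocks_zero₂₁, det_fromBlocks_zero₂₁,
    det_lorentz_sq_smul_M0rel hv]
  simp

theorem stmt13_general (d : ℕ) (ε : ℝ)
    (v H : Fin d → ℝ) (hv : ε ^ 2 * ∑ i, v i ^ 2 < 1) :
    (Jac d ε v H).det = lorentz d ε v ^ (d + 2) ∧ IsUnit (Jac d ε v H) := by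
  have hdet := det_Jac H hv
  refine ⟨hdet, ?_⟩
  rw [isUnit_iff_isUnit_det, hdet]
  exact (pow_pos (lorentz_pos hv) _).ne'.isUnit

/-- `det 𝐉 = Γ^{d+2}` (in particular `Γ⁵` for `d = 3`), so the Jacobian `𝐉` is invertible. -/
theorem stmt13 (d : ℕ) (hd : d = 2 ∨ d = 3) (ε : ℝ) (hε : 0 < ε)
    (v H : Fin d → ℝ) (hv : ε ^ 2 * ∑ i, v i ^ 2 < 1) :
    (Jac d ε v H).det = lorentz d ε v ^ (d + 2) ∧ IsUnit (Jac d ε v H) :=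
  stmt13_general d ε v H hv
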